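/- arXiv:1304.1402 — 5 statements merged into one kernel-verified Lean document; each statement's English description precedes it below -/
import Mathlib

section
/- Consider the theory T consisting of the universally quantified clauses: G(x) ∨ B(x); B(x₁) ∨ ¬E(x₁,x₀) ∨ ¬G(x₀); and G(x₁) ∨ ¬E(x₁,x₀) ∨ ¬B(x₀). Then for every positive even number n, T entails the datalog rule E(xₙ,x₀) ∧ E(xₙ,xₙ₋₁) ∧ … ∧ E(x₁,x₀) → G(xₙ). -/
/-!
Every clause `Q(x₁) ∨ ¬E(x₁,x₀) ∨ ¬P(x₀)` says that colour `P` at the target of an edge forces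
colour `Q` at its source; with the two clauses, `G` and `B` swap along every edge. If `x₀` is `B`,
the shortcut edge `E(xₙ,x₀)` makes `xₙ` a `G`. Otherwise `x₀` is `G`, and since two steps back
along the chain return to `G`, so is `xₙ` for even `n`.
-/

section Propagation

variable {D : Type} {E : D → D → Prop}

theorem of_edge_of_clause {P Q : D → Prop} (hPQ : ∀ x1 x0, Q x1 ∨ ¬ E x1 x0 ∨ ¬ P x0)
    {a b : D} (hE : E a b) (hP : P b) : Q a :=
  (hPQ a b).resolve_right (not_or_intro (not_not_intro hE) (not_not_intro hP))

theorem G_of_even_chain {G B : D → Prop}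
    (hGB : ∀ x1 x0, B x1 ∨ ¬ E x1 x0 ∨ ¬ G x0) (hBG : ∀ x1 x0, G x1 ∨ ¬ E x1 x0 ∨ ¬ B x0)
    {m : ℕ} (x : ℕ → D) (hchain : ∀ i, 1 ≤ i → i ≤ 2 * m → E (x i) (x (i - 1)))
    (h0 : G (x 0)) : G (x (2 * m)) := by
  suffices h : ∀ k ≤ m, G (x (2 * k)) from h m le_rfl
  intro k
  induction k with
  | zero => exact fun _ => h0
  | succ k ih =>
    intro hk
    have hodd : E (x (2 * k + 1)) (x (2 * k)) := hchain (2 * k + 1) (by omega) (by omega)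
    have heven : E (x (2 * (k + 1))) (x (2 * k + 1)) := hchain (2 * (k + 1)) (by omega) (by omega)
    exact of_edge_of_clause hBG heven (of_edge_of_clause hGB hodd (ih (by omega)))

end Propagation

/-- The theory with clauses `G(x) ∨ B(x)`, `B(x₁) ∨ ¬E(x₁,x₀) ∨ ¬G(x₀)`,
`G(x₁) ∨ ¬E(x₁,x₀) ∨ ¬B(x₀)` entails, for every positive even `n`, the datalog rule
`E(xₙ,x₀) ∧ E(xₙ,xₙ₋₁) ∧ … ∧ E(x₁,x₀) → G(xₙ)`.  Entailment is expressed semantically: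
the conclusion holds in every model of the three clauses. -/
theorem elu_entails_even_cycle_rules :
    ∀ (D : Type) (G B : D → Prop) (E : D → D → Prop),
      (∀ x, G x ∨ B x) →
      (∀ x1 x0, B x1 ∨ ¬ E x1 x0 ∨ ¬ G x0) →
      (∀ x1 x0, G x1 ∨ ¬ E x1 x0 ∨ ¬ B x0) →
      ∀ n : ℕ, 0 < n → Even n →
        ∀ x : ℕ → D,
          E (x n) (x 0) →
          (∀ i, 1 ≤ i → i ≤ n → E (x i) (x (i - 1))) →
          G (x n) := by
  intro D G B E htot hGB hBG n _ hev x hshort hchain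
  obtain ⟨m, rfl⟩ := hev.two_dvd
  rcases htot (x 0) with hG0 | hB0
  · exact G_of_even_chain hGB hBG x hchain hG0
  · exact of_edge_of_clause hBG hshort hB0
end

section
/- Let T be the theory {∀x. G(x) ∨ B(x); ∀x₁x₀. E(x₁,x₀) ∧ G(x₀) → B(x₁); ∀x₁x₀. E(x₁,x₀) ∧ B(x₀) → G(x₁)}. For every finite set A of ground atoms over the predicate E and every constant v: T ∪ A ⊨ G(v) if and only if there exists a constant w such that v is reachable from w in the directed graph given by A (with E(u,u') meaning an edge from u' to u traversed towards u) by a path of positive even length and also by a path of positive odd length. -/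
/-- `v` is reachable from `w` by a path of length `n` in the set of `E`-atoms `A`:
there are `u_n = v, …, u_0 = w` with `E(uᵢ,uᵢ₋₁) ∈ A` for `1 ≤ i ≤ n`. -/
def ReachBy {C : Type} (A : Set (C × C)) (v w : C) (n : ℕ) : Prop :=
  ∃ u : ℕ → C, u n = v ∧ u 0 = w ∧ ∀ i, 1 ≤ i → i ≤ n → (u i, u (i - 1)) ∈ A

/-- `T ∪ A ⊨ G(v)` where `T = {∀x. G(x)∨B(x); ∀x₁x₀. E(x₁,x₀)∧G(x₀)→B(x₁);
∀x₁x₀. E(x₁,x₀)∧B(x₀)→G(x₁)}` and `A` is a set of ground `E`-atoms over constants `C`. -/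
def TAEntailsG {C : Type} (A : Set (C × C)) (v : C) : Prop :=
  ∀ (D : Type) (cv : C → D) (G B : D → Prop) (E : D → D → Prop),
    (∀ x, G x ∨ B x) →
    (∀ x1 x0, E x1 x0 → G x0 → B x1) →
    (∀ x1 x0, E x1 x0 → B x0 → G x1) →
    (∀ p ∈ A, E (cv p.1) (cv p.2)) →
    G (cv v)

/-!
A model of `T ∪ A` colours the constants by `G` and `B` so that colours alternate along every
edge: an even path preserves the colour of its source, an odd path flips it. So if `w` reaches
`v` by paths of both parities, `v` is `G` whichever colour `w` has.

Conversely, colour `x` by `G` when some path `w → x` has even length exactly when `w` reaches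
`v` by an odd path, and by `B` when it has even length exactly when `w` does not; every `x` is
coloured via the empty path, and extending a path by an edge flips its colour, so this is a
model. If it colours `v` by `G` through a path `w → v`, that path is even and `w` reaches `v`
oddly. An empty path means `w = v` lies on an odd cycle, which traversed twice is even.
-/

section

variable {C : Type} {A : Set (C × C)}

theorem reachBy_zero_iff {v w : C} : ReachBy A v w 0 ↔ v = w := by
  constructor
  · rintro ⟨u, hv, hw, -⟩
    exact hv.symm.trans hw
  · rintro rfl
    exact ⟨fun _ => v, rfl, rfl, fun i h1 h0 => absurd (h1.trans h0) (by omega)⟩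

theorem reachBy_succ_iff {v w : C} {n : ℕ} :
    ReachBy A v w (n + 1) ↔ ∃ u, ReachBy A u w n ∧ (v, u) ∈ A := by
  constructor
  · rintro ⟨u, hv, hw, hE⟩
    exact ⟨u n, ⟨u, rfl, hw, fun i h1 hi => hE i h1 (by omega)⟩, hv ▸ hE (n + 1) (by omega) le_rfl⟩
  · rintro ⟨x, ⟨u, hx, hw, hE⟩, hvx⟩
    refine ⟨fun i => if i ≤ n then u i else v, by simp, by simp [hw], fun i h1 hi => ?_⟩
    have hprev : i - 1 ≤ n := by omega
    by_cases hin : i ≤ n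
    · simpa [hin, hprev] using hE i h1 hin
    · have hi' : i = n + 1 := by omega
      simpa [hin, hprev, hi', hx] using hvx

theorem ReachBy.trans {v y w : C} {n m : ℕ} (h₁ : ReachBy A y w n) (h₂ : ReachBy A v y m) :
    ReachBy A v w (n + m) := by
  induction m generalizing v with
  | zero => rwa [reachBy_zero_iff.mp h₂]
  | succ m ih =>
    obtain ⟨u, hu, hvu⟩ := reachBy_succ_iff.mp h₂
    exact reachBy_succ_iff.mpr ⟨u, ih hu, hvu⟩

theorem ReachBy.alternates {P Q : C → Prop} (hPQ : ∀ x₁ x₀, (x₁, x₀) ∈ A → P x₀ → Q x₁)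
    (hQP : ∀ x₁ x₀, (x₁, x₀) ∈ A → Q x₀ → P x₁) {v w : C} {n : ℕ} (h : ReachBy A v w n)
    (hw : P w) : (Even n → P v) ∧ (Odd n → Q v) := by
  induction n generalizing v with
  | zero =>
    rw [reachBy_zero_iff.mp h]
    exact ⟨fun _ => hw, fun h0 => absurd h0 (by decide)⟩
  | succ n ih =>
    obtain ⟨u, hu, hvu⟩ := reachBy_succ_iff.mp h
    refine ⟨fun hev => hQP _ _ hvu ((ih hu).2 ?_), fun hodd => hPQ _ _ hvu ((ih hu).1 ?_)⟩
    · simpa [Nat.even_add_one] using hev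
    · simpa [Nat.odd_add_one] using hodd

theorem TAEntailsG.of_even_and_odd_reach {v w : C} {n m : ℕ} (hn : Even n)
    (hrn : ReachBy A v w n) (hm : Odd m) (hrm : ReachBy A v w m) : TAEntailsG A v := by
  intro D cv G B E hGB hGB' hBG hA
  have hEdge : ∀ x₁ x₀, (x₁, x₀) ∈ A → E (cv x₁) (cv x₀) := fun x₁ x₀ h => hA _ h
  rcases hGB (cv w) with hg | hb
  · exact (ReachBy.alternates (P := fun x => G (cv x)) (Q := fun x => B (cv x))
      (fun _ _ h => hGB' _ _ (hEdge _ _ h)) (fun _ _ h => hBG _ _ (hEdge _ _ h)) hrn hg).1 hn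
  · exact (ReachBy.alternates (P := fun x => B (cv x)) (Q := fun x => G (cv x))
      (fun _ _ h => hBG _ _ (hEdge _ _ h)) (fun _ _ h => hGB' _ _ (hEdge _ _ h)) hrm hb).2 hm

def ColouredBy (A : Set (C × C)) (c : C → Prop) (x : C) : Prop :=
  ∃ w n, ReachBy A x w n ∧ (Even n ↔ c w)

theorem colouredBy_or_colouredBy_not (c : C → Prop) (x : C) :
    ColouredBy A c x ∨ ColouredBy A (fun w => ¬ c w) x := by
  by_cases hx : c x
  · exact .inl ⟨x, 0, reachBy_zero_iff.mpr rfl, iff_of_true Even.zero hx⟩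
  · exact .inr ⟨x, 0, reachBy_zero_iff.mpr rfl, iff_of_true Even.zero hx⟩

theorem ColouredBy.flip {c : C → Prop} {x₁ x₀ : C} (h : ColouredBy A c x₀) (he : (x₁, x₀) ∈ A) :
    ColouredBy A (fun w => ¬ c w) x₁ := by
  obtain ⟨w, n, hr, hpar⟩ := h
  exact ⟨w, n + 1, reachBy_succ_iff.mpr ⟨x₀, hr, he⟩, by rw [Nat.even_add_one, hpar]⟩

theorem TAEntailsG.colouredBy {v : C} (h : TAEntailsG A v) (c : C → Prop) :
    ColouredBy A c v :=
  h C id (ColouredBy A c) (ColouredBy A fun w => ¬ c w) (fun x₁ x₀ => (x₁, x₀) ∈ A)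
    (colouredBy_or_colouredBy_not c) (fun _ _ he hx => hx.flip he)
    (fun _ _ he hx => by simpa only [not_not] using hx.flip he) (fun _ hp => hp)

theorem exists_even_and_odd_reach_of_colouredBy {v : C}
    (h : ColouredBy A (fun w => ∃ m, Odd m ∧ ReachBy A v w m) v) :
    ∃ w, (∃ n, 0 < n ∧ Even n ∧ ReachBy A v w n) ∧ (∃ n, 0 < n ∧ Odd n ∧ ReachBy A v w n) := by
  obtain ⟨w, n, hrn, hpar⟩ := h
  rcases Nat.even_or_odd n with hn | hn
  · obtain ⟨m, hm, hrm⟩ := hpar.mp hn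
    rcases Nat.eq_zero_or_pos n with rfl | hnpos
    · obtain rfl := reachBy_zero_iff.mp hrn
      exact ⟨v, ⟨m + m, by have := hm.pos; omega, ⟨m, rfl⟩, hrm.trans hrm⟩, ⟨m, hm.pos, hm, hrm⟩⟩
    · exact ⟨w, ⟨n, hnpos, hn, hrn⟩, ⟨m, hm.pos, hm, hrm⟩⟩
  · exact absurd (hpar.mpr ⟨n, hn, hrn⟩) (Nat.not_even_iff_odd.mpr hn)

end

/-- `T ∪ A ⊨ G(v)` iff some constant `w` reaches `v` by both a path of
positive even length and a path of positive odd length. -/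
theorem entailsG_iff_even_and_odd_reach {C : Type} (A : Finset (C × C)) (v : C) :
    TAEntailsG (↑A : Set (C × C)) v ↔
      ∃ w : C, (∃ n, 0 < n ∧ Even n ∧ ReachBy (↑A : Set (C × C)) v w n) ∧
               (∃ n, 0 < n ∧ Odd n ∧ ReachBy (↑A : Set (C × C)) v w n) := by
  constructor
  · exact fun h => exists_even_and_odd_reach_of_colouredBy (h.colouredBy _)
  · rintro ⟨w, ⟨n, -, hn, hrn⟩, ⟨m, -, hm, hrm⟩⟩
    exact TAEntailsG.of_even_and_odd_reach hn hrn hm hrm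
end

section
/- In the directed graph with vertices v₀,…,vₙ (n ≥ 2 even) and edge set A consisting of the chain edges from vᵢ to vᵢ₋₁ for 1 ≤ i ≤ n together with the chord from vₙ to v₀: for every proper subset A' ⊊ A and every vertex u, there is at most one path in A' from v₀ to u; in particular no vertex is reachable from any vertex by both a positive even-length and a positive odd-length path in A'. -/
/-- The 'cycle plus chord' edge set on vertices `0,…,n`: the chord `E(n,0)` together
with the chain edges `E(i,i-1)` for `1 ≤ i ≤ n`.  (`E(a,b)` is traversed towards `a`.) -/
def chordChain (n : ℕ) : Set (ℕ × ℕ) :=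
  {p | p = (n, 0) ∨ ∃ i, 1 ≤ i ∧ i ≤ n ∧ p = (i, i - 1)}

/-- `f` is a path of length `m` from `w` to `u` in `A`: `f 0 = w`, `f m = u`, and
`(f i, f (i-1)) ∈ A` for `1 ≤ i ≤ m`. -/
def IsPathFrom (A : Set (ℕ × ℕ)) (w u : ℕ) (m : ℕ) (f : ℕ → ℕ) : Prop :=
  f 0 = w ∧ f m = u ∧ ∀ i, 1 ≤ i → i ≤ m → (f i, f (i - 1)) ∈ A

/-!
Every edge of `chordChain n` leads from `b` to `b + 1` or from `0` to `n`, and for `n ≠ 0` no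
edge leaves `n`. Hence a path either climbs the chain one step at a time, so that its length is
the difference of its endpoints, or it is the single chord step `0 → n`. A chain path and the
chord step share their endpoints only when both run from `0` to `n`, and then together they use
every edge, which a proper subset of the edges forbids.
-/

lemma mem_chordChain {n a b : ℕ} :
    (a, b) ∈ chordChain n ↔ (a = n ∧ b = 0) ∨ (a = b + 1 ∧ a ≤ n) := by
  simp only [chordChain, Set.mem_ofPred_eq, Prod.mk.injEq]
  constructor
  · rintro (h | ⟨i, hi1, hi, rfl, rfl⟩)
    · exact Or.inl h
    · right; omega
  · rintro (h | ⟨rfl, h⟩)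
    · exact Or.inl h
    · exact Or.inr ⟨b + 1, by omega, h, rfl, rfl⟩

lemma eq_add_of_forall_eq_succ {f : ℕ → ℕ} {m : ℕ}
    (h : ∀ i, 1 ≤ i → i ≤ m → f i = f (i - 1) + 1) : ∀ i ≤ m, f i = f 0 + i := by
  intro i hi
  induction i with
  | zero => rfl
  | succ j ih =>
    rw [h (j + 1) (by omega) hi, Nat.add_sub_cancel, ih (by omega)]
    rfl

namespace IsPathFrom

variable {n : ℕ} {A : Set (ℕ × ℕ)} {w u m : ℕ} {f : ℕ → ℕ}

lemma step (hA : A ⊆ chordChain n) (hf : IsPathFrom A w u m f) {i : ℕ} (h1 : 1 ≤ i)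
    (him : i ≤ m) : (f i = n ∧ f (i - 1) = 0) ∨ (f i = f (i - 1) + 1 ∧ f i ≤ n) :=
  mem_chordChain.1 (hA (hf.2.2 i h1 him))

lemma apply_ne_zero (hn : n ≠ 0) (hA : A ⊆ chordChain n) (hf : IsPathFrom A w u m f) {i : ℕ}
    (h1 : 1 ≤ i) (him : i ≤ m) : f i ≠ 0 := by
  rcases hf.step hA h1 him with ⟨h, -⟩ | ⟨h, -⟩ <;> omega

lemma apply_eq_succ_of_two_le (hn : n ≠ 0) (hA : A ⊆ chordChain n)
    (hf : IsPathFrom A w u m f) {i : ℕ} (h2 : 2 ≤ i) (him : i ≤ m) : f i = f (i - 1) + 1 ∧ f i ≤ n :=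
  (hf.step hA (by omega) him).resolve_left fun h ↦
    hf.apply_ne_zero hn hA (i := i - 1) (by omega) (by omega) h.2

theorem chain_or_chord (hn : n ≠ 0) (hA : A ⊆ chordChain n) (hf : IsPathFrom A w u m f) :
    (∀ i ≤ m, f i = w + i) ∨ (w = 0 ∧ u = n ∧ m = 1) := by
  rcases Nat.eq_zero_or_pos m with rfl | hm
  · left
    intro i hi
    rw [Nat.le_zero.1 hi]
    exact hf.1
  rcases hf.step hA le_rfl hm with ⟨hf1, hf0⟩ | ⟨hf1, -⟩
  · right
    have hm1 : m = 1 := by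
      by_contra hm1
      obtain ⟨hf2, hf2n⟩ : f 2 = f 1 + 1 ∧ f 2 ≤ n :=
        hf.apply_eq_succ_of_two_le hn hA le_rfl (by omega)
      omega
    subst hm1
    exact ⟨hf.1.symm.trans hf0, hf.2.1.symm.trans hf1, rfl⟩
  · left
    have hsucc : ∀ i, 1 ≤ i → i ≤ m → f i = f (i - 1) + 1 := fun i h1 him ↦ by
      rcases eq_or_lt_of_le h1 with rfl | h2
      · exact hf1
      · exact (hf.apply_eq_succ_of_two_le hn hA h2 him).1
    simpa only [hf.1] using eq_add_of_forall_eq_succ hsucc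

lemma length_eq_of_chain {m' : ℕ} {g : ℕ → ℕ} (hf : IsPathFrom A w u m f)
    (hfc : ∀ i ≤ m, f i = w + i) (hg : IsPathFrom A w u m' g) (hgc : ∀ i ≤ m', g i = w + i) :
    m = m' := by
  have := hf.2.1.symm.trans (hfc m le_rfl)
  have := hg.2.1.symm.trans (hgc m' le_rfl)
  omega

end IsPathFrom

lemma chordChain_subset_of_chain_of_chord {n m : ℕ} {A : Set (ℕ × ℕ)} {f g : ℕ → ℕ}
    (hf : IsPathFrom A 0 n m f) (hchain : ∀ i ≤ m, f i = i) (hg : IsPathFrom A 0 n 1 g) :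
    chordChain n ⊆ A := by
  obtain rfl : m = n := (hchain m le_rfl).symm.trans hf.2.1
  rintro ⟨a, b⟩ hab
  rcases mem_chordChain.1 hab with ⟨rfl, rfl⟩ | ⟨rfl, hb⟩
  · simpa [hg.1, hg.2.1] using hg.2.2 1 le_rfl le_rfl
  · have hedge := hf.2.2 (b + 1) (by omega) hb
    rwa [hchain _ hb, Nat.add_sub_cancel, hchain _ (by omega)] at hedge

theorem unique_path_in_proper_subset_general (n : ℕ) (hn : 2 ≤ n)
    (A' : Set (ℕ × ℕ)) (hsub : A' ⊆ chordChain n) (hne : A' ≠ chordChain n) :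
    (∀ u m₁ m₂ (f g : ℕ → ℕ), IsPathFrom A' 0 u m₁ f → IsPathFrom A' 0 u m₂ g →
      m₁ = m₂ ∧ ∀ i ≤ m₁, f i = g i) ∧
    (∀ w u, ¬ ((∃ m f, 0 < m ∧ Even m ∧ IsPathFrom A' w u m f) ∧
               (∃ m f, 0 < m ∧ Odd m ∧ IsPathFrom A' w u m f))) := by
  have hn0 : n ≠ 0 := by omega
  have no_chain_and_chord {m : ℕ} {f g : ℕ → ℕ} (hf : IsPathFrom A' 0 n m f)
      (hchain : ∀ i ≤ m, f i = 0 + i) (hg : IsPathFrom A' 0 n 1 g) : False :=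
    hne (hsub.antisymm (chordChain_subset_of_chain_of_chord hf (by simpa using hchain) hg))
  constructor
  · intro u m₁ m₂ f g hf hg
    rcases hf.chain_or_chord hn0 hsub with hfc | ⟨-, hu, rfl⟩ <;>
      rcases hg.chain_or_chord hn0 hsub with hgc | ⟨-, hu, rfl⟩
    · have hm := hf.length_eq_of_chain hfc hg hgc
      exact ⟨hm, fun i hi ↦ (hfc i hi).trans (hgc i (hm ▸ hi)).symm⟩
    · subst hu
      exact (no_chain_and_chord hf hfc hg).elim
    · subst hu
      exact (no_chain_and_chord hg hgc hf).elim
    · refine ⟨rfl, fun i hi ↦ ?_⟩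
      rcases Nat.le_one_iff_eq_zero_or_eq_one.1 hi with rfl | rfl
      · exact hf.1.trans hg.1.symm
      · exact hf.2.1.trans hg.2.1.symm
  · rintro w u ⟨⟨m₁, f, -, hev, hf⟩, ⟨m₂, g, -, hod, hg⟩⟩
    rcases hf.chain_or_chord hn0 hsub with hfc | ⟨-, -, rfl⟩
    · rcases hg.chain_or_chord hn0 hsub with hgc | ⟨rfl, hu, rfl⟩
      · exact Nat.not_even_iff_odd.2 hod (hf.length_eq_of_chain hfc hg hgc ▸ hev)
      · subst hu
        exact no_chain_and_chord hf hfc hg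
    · exact Nat.not_even_one hev

/-- For every proper subset `A'` of the cycle-plus-chord edge set
(`n ≥ 2` even), any vertex has at most one path from `v₀ = 0` to it in `A'`, and no
vertex is reachable from any vertex by both a positive even-length and a positive
odd-length path in `A'`. -/
theorem unique_path_in_proper_subset (n : ℕ) (hn : 2 ≤ n) (he : Even n)
    (A' : Set (ℕ × ℕ)) (hsub : A' ⊆ chordChain n) (hne : A' ≠ chordChain n) :
    (∀ u m₁ m₂ (f g : ℕ → ℕ), IsPathFrom A' 0 u m₁ f → IsPathFrom A' 0 u m₂ g →
      m₁ = m₂ ∧ ∀ i ≤ m₁, f i = g i) ∧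
    (∀ w u, ¬ ((∃ m f, 0 < m ∧ Even m ∧ IsPathFrom A' w u m f) ∧
               (∃ m f, 0 < m ∧ Odd m ∧ IsPathFrom A' w u m f))) :=
  unique_path_in_proper_subset_general n hn A' hsub hne
end

section
/- Let T be the ELU theory with clauses: F_R(x) ↔ R(x)∧∃y(edge(x,y)∧R(y)); analogously F_B and F_G with B, G; F(x) ↔ F_R(x)∨F_B(x)∨F_G(x); V(x) → R(x)∨G(x)∨B(x); NC(x) ↔ ∃y(vertex(x,y)∧F(y)). For an undirected graph H on vertices 1,…,s, let A_H be the ABox with individuals a₁,…,a_s,v containing edge(aᵢ,a_j) and edge(a_j,aᵢ) for each edge {i,j} of H, and V(aᵢ), vertex(v,aᵢ) for 1 ≤ i ≤ s. Then T ∪ A_H ⊨ NC(v) if and only if H is not 3-colorable. -/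
/-!
If `NC(v)` fails in a model of `T ∪ A_H`, then no `aᵢ` satisfies `F`, i.e. no colour class among
`R`, `G`, `B` contains an edge at an `aᵢ`; since `V(aᵢ)` puts every `aᵢ` into some class, choosing
one class per vertex is a proper 3-colouring of `H`. Conversely, a proper colouring `c` gives a
model on `{v, a₁, …, a_s}` whose colour classes are those of `c` (with `v` added to one of them)
and whose `edge` is the symmetric closure of `H`: it has no monochromatic edge, so `F` and `NC`
are empty.
-/

theorem exists_proper_coloring_of_cover {ι κ : Type*} (H : ι → ι → Prop) (P : κ → ι → Prop)
    (hcover : ∀ i, ∃ k, P k i) (hindep : ∀ k i j, H i j → P k i → ¬ P k j) :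
    ∃ c : ι → κ, ∀ i j, H i j → c i ≠ c j := by
  choose c hc using hcover
  exact ⟨c, fun i j hij hcij => hindep (c i) i j hij (hc i) (hcij ▸ hc j)⟩

theorem exists_proper_coloring_of_forall_not_F {ι D : Type*} (H : ι → ι → Prop) (a : ι → D)
    (R G B FR FB FG F : D → Prop) (edge : D → D → Prop)
    (hFR : ∀ x, FR x ↔ R x ∧ ∃ y, edge x y ∧ R y)
    (hFB : ∀ x, FB x ↔ B x ∧ ∃ y, edge x y ∧ B y)
    (hFG : ∀ x, FG x ↔ G x ∧ ∃ y, edge x y ∧ G y)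
    (hF : ∀ x, F x ↔ FR x ∨ FB x ∨ FG x)
    (hcover : ∀ i, R (a i) ∨ G (a i) ∨ B (a i))
    (hedge : ∀ i j, H i j → edge (a i) (a j)) (hnF : ∀ i, ¬ F (a i)) :
    ∃ c : ι → Fin 3, ∀ i j, H i j → c i ≠ c j := by
  refine exists_proper_coloring_of_cover H (fun k i => ![R, G, B] k (a i)) ?_ ?_
  · intro i
    rcases hcover i with h | h | h
    exacts [⟨0, h⟩, ⟨1, h⟩, ⟨2, h⟩]
  · intro k i j hij hi hj
    have hmono : ∀ P : D → Prop, P (a i) → P (a j) → P (a i) ∧ ∃ y, edge (a i) y ∧ P y :=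
      fun P hi hj => ⟨hi, a j, hedge i j hij, hj⟩
    apply hnF i
    rw [hF]
    fin_cases k
    · exact Or.inl ((hFR _).2 (hmono R hi hj))
    · exact Or.inr (Or.inr ((hFG _).2 (hmono G hi hj)))
    · exact Or.inr (Or.inl ((hFB _).2 (hmono B hi hj)))

theorem not_monochromatic_edge {D κ : Type*} (edge : D → D → Prop) (col : D → κ)
    (hcol : ∀ x y, edge x y → col x ≠ col y) (k : κ) (x : D) :
    ¬ (col x = k ∧ ∃ y, edge x y ∧ col y = k) := by
  rintro ⟨rfl, y, hxy, hy⟩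
  exact hcol x y hxy hy.symm

theorem elu_nc_entailment_iff_non_3_colorable_general {s : ℕ}
    (H : Fin s → Fin s → Prop) :
    (∀ (D : Type) (a : Fin s → D) (v : D)
        (R G B FR FB FG F V NC : D → Prop) (edge vertex : D → D → Prop),
      (∀ x, FR x ↔ R x ∧ ∃ y, edge x y ∧ R y) →
      (∀ x, FB x ↔ B x ∧ ∃ y, edge x y ∧ B y) →
      (∀ x, FG x ↔ G x ∧ ∃ y, edge x y ∧ G y) →
      (∀ x, F x ↔ FR x ∨ FB x ∨ FG x) →
      (∀ x, V x → R x ∨ G x ∨ B x) →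
      (∀ x, NC x ↔ ∃ y, vertex x y ∧ F y) →
      (∀ i j, H i j → edge (a i) (a j) ∧ edge (a j) (a i)) →
      (∀ i, V (a i) ∧ vertex v (a i)) →
      NC v)
    ↔ ¬ ∃ c : Fin s → Fin 3, ∀ i j, H i j → c i ≠ c j := by
  constructor
  · rintro hent ⟨c, hc⟩
    let col : Option (Fin s) → Fin 3 := fun x => x.elim 0 c
    let edge := Relation.Map (fun i j => H i j ∨ H j i) some some
    have hcol : ∀ x y, edge x y → col x ≠ col y := by
      rintro _ _ ⟨i, j, hij | hji, rfl, rfl⟩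
      exacts [hc i j hij, (hc j i hji).symm]
    let P : Fin 3 → Option (Fin s) → Prop := fun k x => col x = k ∧ ∃ y, edge x y ∧ col y = k
    obtain ⟨y, -, hy⟩ := hent (Option (Fin s)) some none (col · = 0) (col · = 1) (col · = 2)
      (P 0) (P 2) (P 1) (fun x => P 0 x ∨ P 2 x ∨ P 1 x) (fun _ => True)
      (fun x => ∃ y, True ∧ (P 0 y ∨ P 2 y ∨ P 1 y)) edge (fun _ _ => True)
      (fun _ => Iff.rfl) (fun _ => Iff.rfl) (fun _ => Iff.rfl) (fun _ => Iff.rfl)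
      (fun x _ => by omega) (fun _ => Iff.rfl)
      (fun i j hij => ⟨⟨i, j, Or.inl hij, rfl, rfl⟩, ⟨j, i, Or.inr hij, rfl, rfl⟩⟩)
      (fun _ => ⟨trivial, trivial⟩)
    rcases hy with h | h | h <;> exact not_monochromatic_edge edge col hcol _ y h
  · intro hncol D a v R G B FR FB FG F V NC edge vertex hFR hFB hFG hF hV hNC hedge hab
    by_contra hnc
    exact hncol (exists_proper_coloring_of_forall_not_F H a R G B FR FB FG F edge hFR hFB hFG hF
      (fun i => hV _ (hab i).1) (fun i j hij => (hedge i j hij).1)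
      (fun i hFi => hnc ((hNC v).2 ⟨a i, (hab i).2, hFi⟩)))

/-- For the ELU theory `T` with
`F_R(x) ↔ R(x) ∧ ∃y(edge(x,y) ∧ R(y))` (analogously for `F_B`, `F_G`),
`F(x) ↔ F_R(x) ∨ F_B(x) ∨ F_G(x)`, `V(x) → R(x) ∨ G(x) ∨ B(x)`, and
`NC(x) ↔ ∃y(vertex(x,y) ∧ F(y))`, and the ABox `A_H` encoding an undirected graph `H`
on vertices `1,…,s` (individuals `a₁,…,a_s` and `v`, with `edge` asserted in both
directions for every edge of `H`, and `V(aᵢ)`, `vertex(v,aᵢ)` for all `i`):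
`T ∪ A_H ⊨ NC(v)` iff `H` is not 3-colorable. -/
theorem elu_nc_entailment_iff_non_3_colorable {s : ℕ}
    (H : Fin s → Fin s → Prop) (hsym : Symmetric H) :
    (∀ (D : Type) (a : Fin s → D) (v : D)
        (R G B FR FB FG F V NC : D → Prop) (edge vertex : D → D → Prop),
      (∀ x, FR x ↔ R x ∧ ∃ y, edge x y ∧ R y) →
      (∀ x, FB x ↔ B x ∧ ∃ y, edge x y ∧ B y) →
      (∀ x, FG x ↔ G x ∧ ∃ y, edge x y ∧ G y) →
      (∀ x, F x ↔ FR x ∨ FB x ∨ FG x) →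
      (∀ x, V x → R x ∨ G x ∨ B x) →
      (∀ x, NC x ↔ ∃ y, vertex x y ∧ F y) →
      (∀ i j, H i j → edge (a i) (a j) ∧ edge (a j) (a i)) →
      (∀ i, V (a i) ∧ vertex v (a i)) →
      NC v)
    ↔ ¬ ∃ c : Fin s → Fin 3, ∀ i j, H i j → c i ≠ c j :=
  elu_nc_entailment_iff_non_3_colorable_general H
end

section
/- Over a finite signature, a saturation process that only keeps pairwise non-variant clauses of size bounded by a fixed constant k terminates: any set of clauses over finitely many predicates in which every clause has at most k literals and no two clauses are variants of each other is finite. -/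
/-!
Since `V` may be assumed infinite (otherwise there are only finitely many clauses at all), every
clause with at most `k` literals can be renamed by a permutation of `V` so that its at most
`k · max ar` variables land in one fixed finite set `B`. Only finitely many clauses have all
their variables in `B`, and two clauses with the same renaming are variants of each other, so
renaming is injective on a pairwise non-variant set.
-/

/-- A literal over a finite signature: a sign, a predicate `p : P`, and an argument
tuple of variables of length `ar p`. -/
abbrev GLit (P V : Type) (ar : P → ℕ) := Bool × Σ p : P, Fin (ar p) → V

/-- Applying a variable substitution to a literal. -/
def substGLit {P V : Type} {ar : P → ℕ} (σ : V → V) (l : GLit P V ar) : GLit P V ar :=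
  (l.1, ⟨l.2.1, fun i => σ (l.2.2 i)⟩)

/-- Two clauses are variants: each subsumes the other via a variable renaming
(an injective variable-to-variable substitution). -/
def VariantOf {P V : Type} {ar : P → ℕ} [DecidableEq P] [DecidableEq V]
    (Cl Dl : Finset (GLit P V ar)) : Prop :=
  (∃ σ : V → V, Function.Injective σ ∧ Cl.image (substGLit σ) ⊆ Dl) ∧
  (∃ τ : V → V, Function.Injective τ ∧ Dl.image (substGLit τ) ⊆ Cl)

namespace GLit

variable {P V : Type} {ar : P → ℕ}

def vars [DecidableEq V] (l : GLit P V ar) : Finset V :=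
  Finset.univ.image l.2.2

lemma card_vars_le [Fintype P] [DecidableEq V] (l : GLit P V ar) :
    (vars l).card ≤ Finset.univ.sup ar :=
  calc (vars l).card ≤ ar l.2.1 := Finset.card_image_le.trans (by simp)
    _ ≤ Finset.univ.sup ar := Finset.le_sup (Finset.mem_univ _)

lemma vars_substGLit [DecidableEq V] (σ : V → V) (l : GLit P V ar) :
    vars (substGLit σ l) = (vars l).image σ := by
  rw [vars, vars, Finset.image_image]
  rfl

lemma finite_setOf_vars_subset [Finite P] [DecidableEq V] (B : Finset V) :
    {l : GLit P V ar | vars l ⊆ B}.Finite := by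
  refine (Set.finite_range fun l : GLit P B ar =>
    (l.1, ⟨l.2.1, fun i => (l.2.2 i : V)⟩)).subset ?_
  rintro ⟨b, p, f⟩ hl
  have hf : ∀ i, f i ∈ B := fun i => hl (Finset.mem_image_of_mem f (Finset.mem_univ i))
  exact ⟨(b, ⟨p, fun i => ⟨f i, hf i⟩⟩), rfl⟩

end GLit

section

variable {P V : Type} {ar : P → ℕ} [DecidableEq V]

def clauseVars (Cl : Finset (GLit P V ar)) : Finset V :=
  Cl.biUnion GLit.vars

lemma card_clauseVars_le [Fintype P] (Cl : Finset (GLit P V ar)) :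
    (clauseVars Cl).card ≤ Cl.card * Finset.univ.sup ar :=
  calc (clauseVars Cl).card ≤ ∑ l ∈ Cl, (GLit.vars l).card := Finset.card_biUnion_le
    _ ≤ ∑ _l ∈ Cl, Finset.univ.sup ar := Finset.sum_le_sum fun l _ => GLit.card_vars_le l
    _ = Cl.card * Finset.univ.sup ar := by rw [Finset.sum_const, smul_eq_mul]

lemma finite_setOf_clauseVars_subset [Finite P] (B : Finset V) :
    {Cl : Finset (GLit P V ar) | clauseVars Cl ⊆ B}.Finite := by
  refine ((GLit.finite_setOf_vars_subset B).finite_subsets.preimage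
    Finset.coe_injective.injOn).subset fun Cl hCl l hl => ?_
  exact (Finset.subset_biUnion_of_mem GLit.vars hl).trans hCl

variable [DecidableEq P]

lemma clauseVars_image_substGLit (σ : V → V) (Cl : Finset (GLit P V ar)) :
    clauseVars (Cl.image (substGLit σ)) = (clauseVars Cl).image σ := by
  simp only [clauseVars, Finset.image_biUnion, Finset.biUnion_image, GLit.vars_substGLit]

lemma image_substGLit_perm_symm (π : Equiv.Perm V) (Cl : Finset (GLit P V ar)) :
    (Cl.image (substGLit π)).image (substGLit π.symm) = Cl := by
  simp [Finset.image_image, Function.comp_def, substGLit]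

lemma variantOf_image_perm (π : Equiv.Perm V) (Cl : Finset (GLit P V ar)) :
    VariantOf Cl (Cl.image (substGLit π)) :=
  ⟨⟨π, π.injective, le_rfl⟩,
    ⟨π.symm, π.symm.injective, (image_substGLit_perm_symm π Cl).le⟩⟩

lemma variantOf_of_image_perm_eq {π ρ : Equiv.Perm V} {Cl Dl : Finset (GLit P V ar)}
    (h : Cl.image (substGLit π) = Dl.image (substGLit ρ)) : VariantOf Cl Dl := by
  have hDl : Dl = Cl.image (substGLit (π.trans ρ.symm)) := by
    rw [← image_substGLit_perm_symm ρ Dl, ← h, Finset.image_image]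
    rfl
  exact hDl ▸ variantOf_image_perm _ Cl

end

lemma Finset.exists_perm_mapsTo {V : Type} [Infinite V] {A B : Finset V} (h : A.card ≤ B.card) :
    ∃ π : Equiv.Perm V, Set.MapsTo π A B := by
  obtain ⟨f⟩ : Nonempty (A ↪ B) := Function.Embedding.nonempty_of_card_le (by simpa using h)
  obtain ⟨π, hπ⟩ := Cardinal.extend_function_of_lt (s := (A : Set V))
    (f.trans (Function.Embedding.subtype _)) (Cardinal.mk_lt_aleph0.trans_le
      (Cardinal.aleph0_le_mk V)) ⟨Equiv.refl V⟩
  refine ⟨π, fun v hv => ?_⟩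
  rw [hπ ⟨v, hv⟩]
  exact (f ⟨v, hv⟩).2

lemma Set.Finite.of_pairwise_not_variantOf {P V : Type} [Finite P] [DecidableEq P]
    [DecidableEq V] [Infinite V] {ar : P → ℕ} {S : Set (Finset (GLit P V ar))} {N : ℕ}
    (hvars : ∀ Cl ∈ S, (clauseVars Cl).card ≤ N)
    (hnv : ∀ Cl ∈ S, ∀ Dl ∈ S, Cl ≠ Dl → ¬ VariantOf Cl Dl) :
    S.Finite := by
  obtain ⟨B, hB⟩ := _root_.Infinite.exists_subset_card_eq V N
  choose! π hπ using fun Cl (hCl : Cl ∈ S) =>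
    Finset.exists_perm_mapsTo (A := clauseVars Cl) (B := B) (hB ▸ hvars Cl hCl)
  let rename (Cl : Finset (GLit P V ar)) := Cl.image (substGLit (π Cl))
  have hmaps : Set.MapsTo rename S {Cl | clauseVars Cl ⊆ B} := fun Cl hCl => by
    change clauseVars (Cl.image _) ⊆ B
    rw [clauseVars_image_substGLit, ← Finset.coe_subset, Finset.coe_image]
    exact (hπ Cl hCl).image_subset
  have hinj : Set.InjOn rename S := fun Cl hCl Dl hDl h =>
    by_contra fun hne => hnv Cl hCl Dl hDl hne (variantOf_of_image_perm_eq h)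
  exact Set.Finite.of_injOn hmaps hinj (finite_setOf_clauseVars_subset B)

/-- any set of clauses over finitely many predicates (of bounded arity)
in which every clause has at most `k` literals and no two distinct clauses are
variants of each other is finite. -/
theorem bounded_pairwise_nonvariant_finite {P V : Type} [Fintype P] [DecidableEq P]
    [DecidableEq V] (ar : P → ℕ) (k : ℕ)
    (S : Set (Finset (GLit P V ar)))
    (hcard : ∀ Cl ∈ S, Cl.card ≤ k)
    (hnv : ∀ Cl ∈ S, ∀ Dl ∈ S, Cl ≠ Dl → ¬ VariantOf Cl Dl) :
    S.Finite := by
  cases finite_or_infinite V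
  · exact S.toFinite
  · refine Set.Finite.of_pairwise_not_variantOf (N := k * Finset.univ.sup ar) ?_ hnv
    exact fun Cl hCl => (card_clauseVars_le Cl).trans (Nat.mul_le_mul_right _ (hcard Cl hCl))
end
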